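/- Let I ⊂ S = K[x_1,…,x_n] be a squarefree monomial ideal and x a variable of S. Then β_i(I) ≥ β_i(I : x) for all i, where I : x is the colon ideal. -/

import Mathlib

/-!
Let `σ` be the substitution `X j ↦ 1`. Applying `σ` to the matrices of a minimal free resolution
`F` of `I` gives a complex `G` of free modules with the same ranks. `G` is again exact: a cycle `v`
of `G` satisfies `σ v ∈ im G` because `X j - 1` is a nonzerodivisor on `S ⧸ I` (as on the quotient
by any monomial ideal) and on free modules, and `v - σ v = (X j - 1) w` with `w` a cycle of lower
`X j`-degree. The image of the augmentation of `G` is `σ(I)`, which for squarefree `I` is `I : X j`.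
The minimal resolution of `I : X j` therefore maps to `G` and back, the composite is homotopic to
the identity, and minimality makes it the identity modulo the maximal ideal; so its ranks are at
most those of `G`.
-/

open MvPolynomial

/-- A minimal free resolution (with Betti numbers `b i`) of the module `M` over `S`,
minimality being taken with respect to the (maximal) ideal `mx`. -/
structure MinFreeRes (S : Type*) [CommRing S] (mx : Ideal S)
    (M : Type*) [AddCommGroup M] [Module S M] (b : ℕ → ℕ) where
  d : ∀ i : ℕ, (Fin (b (i + 1)) → S) →ₗ[S] (Fin (b i) → S)
  aug : (Fin (b 0) → S) →ₗ[S] M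
  aug_surj : Function.Surjective aug
  exact_aug : LinearMap.ker aug = LinearMap.range (d 0)
  exact : ∀ i, LinearMap.ker (d i) = LinearMap.range (d (i + 1))
  minimal : ∀ i, LinearMap.range (d i) ≤ mx • (⊤ : Submodule S (Fin (b i) → S))

/-- The irrelevant maximal ideal `(x_v : v ∈ V)` of the polynomial ring. -/
noncomputable def maxIdeal (K : Type*) [Field K] (V : Type*) : Ideal (MvPolynomial V K) :=
  Ideal.span (Set.range X)

/-- `I` is a monomial ideal. -/
def IsMonomialIdeal {K V : Type*} [Field K] (I : Ideal (MvPolynomial V K)) : Prop :=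
  ∃ A : Set (V →₀ ℕ), I = Ideal.span ((fun s => monomial s (1 : K)) '' A)

/-- `I` is a squarefree monomial ideal. -/
def IsSqfreeMonomialIdeal {K V : Type*} [Field K] (I : Ideal (MvPolynomial V K)) : Prop :=
  ∃ A : Set (V →₀ ℕ), (∀ s ∈ A, ∀ v, s v ≤ 1) ∧
    I = Ideal.span ((fun s => monomial s (1 : K)) '' A)

/-- The edge ideal of a finite simple graph. -/
noncomputable def edgeIdeal (K : Type*) [Field K] {V : Type*} (G : SimpleGraph V) :
    Ideal (MvPolynomial V K) :=
  Ideal.span {p | ∃ u v, G.Adj u v ∧ p = X u * X v}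

/-- The edge ideal of the induced subgraph `G_W`, in the same polynomial ring. -/
noncomputable def edgeIdealOn (K : Type*) [Field K] {V : Type*} (G : SimpleGraph V) (W : Set V) :
    Ideal (MvPolynomial V K) :=
  Ideal.span {p | ∃ u v, G.Adj u v ∧ u ∈ W ∧ v ∈ W ∧ p = X u * X v}

/-- A cycle `w` in `G` has a chord: an edge of `G` joining two vertices of the cycle
which is not an edge of the cycle. -/
def HasChord {V : Type*} (G : SimpleGraph V) {v : V} (w : G.Walk v v) : Prop :=
  ∃ a b, a ∈ w.support ∧ b ∈ w.support ∧ G.Adj a b ∧ s(a, b) ∉ w.edges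

/-- A graph is chordal if every cycle of length `> 3` has a chord. -/
def IsChordal {V : Type*} (G : SimpleGraph V) : Prop :=
  ∀ (v : V) (w : G.Walk v v), w.IsCycle → 3 < w.length → HasChord G w

/-- A chain of `ℓ + 1` edges of `G` from `e` to `e'`, consecutive ones intersecting. -/
def IsEdgeChain {V : Type*} (G : SimpleGraph V) (e e' : Sym2 V) (ℓ : ℕ) : Prop :=
  ∃ c : Fin (ℓ + 1) → Sym2 V, c 0 = e ∧ c (Fin.last ℓ) = e' ∧
    (∀ i, c i ∈ G.edgeSet) ∧ ∀ i : Fin ℓ, ∃ x : V, x ∈ c i.castSucc ∧ x ∈ c i.succ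

/-- The distance between two edges of `G` (`⊤` if there is no chain joining them). -/
noncomputable def edgeDist {V : Type*} (G : SimpleGraph V) (e e' : Sym2 V) : ℕ∞ :=
  sInf ((fun ℓ : ℕ => (ℓ : ℕ∞)) '' {ℓ | IsEdgeChain G e e' ℓ})

/-- The subgraph `G'` of `G` whose edges are those at distance `≥ 3` from `e`. -/
def farSubgraph {V : Type*} (G : SimpleGraph V) (e : Sym2 V) : SimpleGraph V where
  Adj a b := G.Adj a b ∧ 3 ≤ edgeDist G e s(a, b)
  symm := ⟨by
    intro a b h
    refine ⟨h.1.symm, ?_⟩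
    rw [Sym2.eq_swap]
    exact h.2⟩
  loopless := ⟨fun a h => G.loopless.irrefl a h.1⟩

/-- The transpose (dual) of a map of finite free modules. -/
noncomputable def dualMap {S : Type*} [CommRing S] {a b : ℕ}
    (f : (Fin a → S) →ₗ[S] (Fin b → S)) : (Fin b → S) →ₗ[S] (Fin a → S) :=
  Matrix.toLin' (Matrix.transpose (LinearMap.toMatrix' f))

/-- `S/I` is Gorenstein: either `I = 0` (and `S` is a polynomial ring, hence Gorenstein),
or the dual of a minimal free resolution of `S/I` of length `p` is exact except at the
last spot, where its cokernel (the canonical module `Ext^p_S(S/I, S)`) is isomorphic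
to `S/I`. -/
def IsGorensteinQuot {S : Type*} [CommRing S] (mx : Ideal S) (I : Ideal S) : Prop :=
  I = ⊥ ∨
  ∃ (b : ℕ → ℕ) (q : ℕ) (F : MinFreeRes S mx (S ⧸ I) b),
    (∀ i, q + 1 < i → b i = 0) ∧
    LinearMap.ker (dualMap (F.d 0)) = ⊥ ∧
    (∀ i, i + 1 ≤ q →
      LinearMap.ker (dualMap (F.d (i + 1))) = LinearMap.range (dualMap (F.d i))) ∧
    Nonempty (((Fin (b (q + 1)) → S) ⧸ LinearMap.range (dualMap (F.d q))) ≃ₗ[S] (S ⧸ I))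

namespace LinearMap

variable {R R' R'' : Type*} [CommRing R] [CommRing R'] [CommRing R''] {α β γ : Type*}
  [Fintype α] [DecidableEq α]

noncomputable def mapCoeffs (φ : R →+* R') (f : (α → R) →ₗ[R] (β → R)) :
    (α → R') →ₗ[R'] (β → R') :=
  Matrix.toLin' ((LinearMap.toMatrix' f).map φ)

variable (φ : R →+* R')

theorem mapCoeffs_apply_comp (f : (α → R) →ₗ[R] (β → R)) (v : α → R) :
    f.mapCoeffs φ (φ ∘ v) = φ ∘ f v := by
  funext r
  conv_rhs => rw [Function.comp_apply, ← Matrix.toLin'_toMatrix' f, Matrix.toLin'_apply]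
  rw [RingHom.map_mulVec, mapCoeffs, Matrix.toLin'_apply]

theorem mapCoeffs_comp [Fintype β] [DecidableEq β] (g : (β → R) →ₗ[R] (γ → R))
    (f : (α → R) →ₗ[R] (β → R)) :
    (g ∘ₗ f).mapCoeffs φ = g.mapCoeffs φ ∘ₗ f.mapCoeffs φ := by
  rw [mapCoeffs, mapCoeffs, mapCoeffs, toMatrix'_comp, Matrix.map_mul, Matrix.toLin'_mul]

@[simp]
theorem mapCoeffs_zero : (0 : (α → R) →ₗ[R] (β → R)).mapCoeffs φ = 0 := by
  simp [mapCoeffs]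

theorem mapCoeffs_mapCoeffs (ψ : R' →+* R'') (f : (α → R) →ₗ[R] (β → R)) :
    (f.mapCoeffs φ).mapCoeffs ψ = f.mapCoeffs (ψ.comp φ) := by
  rw [mapCoeffs, mapCoeffs, mapCoeffs, toMatrix'_toLin', Matrix.map_map]
  rfl

end LinearMap

theorem apply_mem_of_mem_smul_top {R ι : Type*} [CommRing R] {I : Ideal R} {z : ι → R}
    (hz : z ∈ I • (⊤ : Submodule R (ι → R))) (r : ι) : z r ∈ I := by
  have : I • (⊤ : Submodule R (ι → R)) ≤ Submodule.pi Set.univ fun _ => I :=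
    Submodule.smul_le.mpr fun a ha x _ r _ => Ideal.mul_mem_right _ _ ha
  exact (Submodule.mem_pi.mp (this hz)) r (Set.mem_univ r)

theorem le_of_fin_range_comp_sub_id_le {R : Type*} [CommRing R] {I : Ideal R} (hI : I ≠ ⊤)
    {n m : ℕ} (u : (Fin n → R) →ₗ[R] (Fin m → R)) (v : (Fin m → R) →ₗ[R] (Fin n → R))
    (h : LinearMap.range (v ∘ₗ u - LinearMap.id) ≤ I • ⊤) : n ≤ m := by
  have : Nontrivial (R ⧸ I) := Ideal.Quotient.nontrivial_iff.mpr hI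
  let π := Ideal.Quotient.mk I
  refine le_of_fin_injective (R ⧸ I) (u.mapCoeffs π) (Function.LeftInverse.injective
    (g := v.mapCoeffs π) fun x => ?_)
  obtain ⟨x, rfl⟩ := Ideal.Quotient.mk_surjective.comp_left x
  rw [LinearMap.mapCoeffs_apply_comp, LinearMap.mapCoeffs_apply_comp]
  funext r
  have := apply_mem_of_mem_smul_top (h ⟨x, rfl⟩) r
  simpa [π, Ideal.Quotient.eq, sub_eq_zero] using this

theorem Module.Projective.exists_comp_eq_of_range_le {R P Q M : Type*} [CommRing R]
    [AddCommGroup P] [Module R P] [AddCommGroup Q] [Module R Q] [AddCommGroup M] [Module R M]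
    [Module.Projective R P] (f : Q →ₗ[R] M) (g : P →ₗ[R] M)
    (h : LinearMap.range g ≤ LinearMap.range f) :
    ∃ l : P →ₗ[R] Q, f ∘ₗ l = g := by
  obtain ⟨l, hl⟩ := Module.projective_lifting_property f.rangeRestrict
    (g.codRestrict _ fun x => h ⟨x, rfl⟩) f.surjective_rangeRestrict
  exact ⟨l, LinearMap.ext fun x => congrArg Subtype.val (LinearMap.congr_fun hl x)⟩

theorem Nat.exists_seq_of_step {X : ℕ → Type*} (r : ∀ i, X i → X (i + 1) → Prop)
    (x₀ : X 0) (x₁ : X 1) (h₀ : r 0 x₀ x₁) (step : ∀ i a b, r i a b → ∃ c, r (i + 1) b c) :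
    ∃ x : ∀ i, X i, x 0 = x₀ ∧ ∀ i, r i (x i) (x (i + 1)) := by
  choose next hnext using step
  let pair : ∀ i, {p : X i × X (i + 1) // r i p.1 p.2} := fun i =>
    Nat.rec ⟨(x₀, x₁), h₀⟩ (fun i p => ⟨(p.1.2, next i _ _ p.2), hnext i _ _ p.2⟩) i
  exact ⟨fun i => (pair i).1.1, rfl, fun i => (pair i).2⟩

structure AugFreeComplex (R : Type*) [CommRing R] (M : Type*) [AddCommGroup M] [Module R M]
    (b : ℕ → ℕ) where
  d : ∀ i : ℕ, (Fin (b (i + 1)) → R) →ₗ[R] (Fin (b i) → R)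
  aug : (Fin (b 0) → R) →ₗ[R] M
  aug_comp_d : aug ∘ₗ d 0 = 0
  d_comp_d : ∀ i, d i ∘ₗ d (i + 1) = 0

namespace AugFreeComplex

open LinearMap

variable {R : Type*} [CommRing R] {M : Type*} [AddCommGroup M] [Module R M] {a c : ℕ → ℕ}

/-- The augmentation need not be surjective. -/
def IsAcyclic (C : AugFreeComplex R M c) : Prop :=
  ker C.aug = range (C.d 0) ∧ ∀ i, ker (C.d i) = range (C.d (i + 1))

theorem exists_chainMap {C : AugFreeComplex R M a} {D : AugFreeComplex R M c}
    (hD : D.IsAcyclic) (haug : range C.aug ≤ range D.aug) :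
    ∃ u : ∀ i, (Fin (a i) → R) →ₗ[R] (Fin (c i) → R),
      D.aug ∘ₗ u 0 = C.aug ∧ ∀ i, D.d i ∘ₗ u (i + 1) = u i ∘ₗ C.d i := by
  obtain ⟨u₀, hu₀⟩ := Module.Projective.exists_comp_eq_of_range_le D.aug C.aug haug
  obtain ⟨u₁, hu₁⟩ := Module.Projective.exists_comp_eq_of_range_le (D.d 0) (u₀ ∘ₗ C.d 0) <| by
    rw [← hD.1, range_le_ker_iff, ← comp_assoc, hu₀, C.aug_comp_d]
  obtain ⟨u, rfl, hu⟩ := Nat.exists_seq_of_step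
    (fun i (p : (Fin (a i) → R) →ₗ[R] (Fin (c i) → R)) q => D.d i ∘ₗ q = p ∘ₗ C.d i)
    u₀ u₁ hu₁ fun i p q hpq => Module.Projective.exists_comp_eq_of_range_le _ _ <| by
      rw [← hD.2 i, range_le_ker_iff, ← comp_assoc, hpq, comp_assoc, C.d_comp_d, comp_zero]
  exact ⟨u, hu₀, hu⟩

theorem exists_homotopy {D : AugFreeComplex R M c} (hD : D.IsAcyclic)
    (φ : ∀ i, (Fin (c i) → R) →ₗ[R] (Fin (c i) → R)) (hφ₀ : D.aug ∘ₗ φ 0 = 0)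
    (hφ : ∀ i, D.d i ∘ₗ φ (i + 1) = φ i ∘ₗ D.d i) :
    ∃ h : ∀ i, (Fin (c i) → R) →ₗ[R] (Fin (c (i + 1)) → R),
      φ 0 = D.d 0 ∘ₗ h 0 ∧ ∀ i, φ (i + 1) = D.d (i + 1) ∘ₗ h (i + 1) + h i ∘ₗ D.d i := by
  obtain ⟨h₀, hh₀⟩ := Module.Projective.exists_comp_eq_of_range_le (D.d 0) (φ 0) <| by
    rw [← hD.1, range_le_ker_iff, hφ₀]
  obtain ⟨h₁, hh₁⟩ := Module.Projective.exists_comp_eq_of_range_le (D.d 1)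
      (φ 1 - h₀ ∘ₗ D.d 0) <| by
    rw [← hD.2 0, range_le_ker_iff, comp_sub, hφ, ← comp_assoc, hh₀, sub_self]
  obtain ⟨h, rfl, hh⟩ := Nat.exists_seq_of_step
    (fun i (p : (Fin (c i) → R) →ₗ[R] (Fin (c (i + 1)) → R)) q =>
      φ (i + 1) = D.d (i + 1) ∘ₗ q + p ∘ₗ D.d i)
    h₀ h₁ (by rw [hh₁, sub_add_cancel]) fun i p q hpq => by
      obtain ⟨r, hr⟩ := Module.Projective.exists_comp_eq_of_range_le (D.d (i + 2))
          (φ (i + 2) - q ∘ₗ D.d (i + 1)) <| by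
        rw [← hD.2 (i + 1), range_le_ker_iff, comp_sub, hφ, ← comp_assoc,
          eq_sub_of_add_eq hpq.symm, sub_comp, comp_assoc, D.d_comp_d, comp_zero, sub_zero,
          sub_self]
      exact ⟨r, by rw [hr, sub_add_cancel]⟩
  exact ⟨h, hh₀.symm, hh⟩

/-- `φ` is null-homotopic, and minimality puts both terms of the homotopy formula in `I • ⊤`. -/
theorem range_le_smul_top_of_aug_comp_eq_zero {I : Ideal R} {D : AugFreeComplex R M c}
    (hD : D.IsAcyclic) (hmin : ∀ i, range (D.d i) ≤ I • ⊤)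
    (φ : ∀ i, (Fin (c i) → R) →ₗ[R] (Fin (c i) → R)) (hφ₀ : D.aug ∘ₗ φ 0 = 0)
    (hφ : ∀ i, D.d i ∘ₗ φ (i + 1) = φ i ∘ₗ D.d i) (i : ℕ) : range (φ i) ≤ I • ⊤ := by
  obtain ⟨h, hh₀, hh⟩ := exists_homotopy hD φ hφ₀ hφ
  cases i with
  | zero => rw [hh₀]; exact (range_comp_le_range _ _).trans (hmin 0)
  | succ i =>
    rw [hh i]
    refine (range_add_le _ _).trans (sup_le ?_ ?_)
    · exact (range_comp_le_range _ _).trans (hmin (i + 1))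
    · rw [range_comp]
      calc (range (D.d i)).map (h i) ≤ (I • ⊤ : Submodule R _).map (h i) :=
            Submodule.map_mono (hmin i)
        _ = I • (⊤ : Submodule R _).map (h i) := Submodule.map_smul'' ..
        _ ≤ I • ⊤ := Submodule.smul_mono le_rfl le_top

theorem le_of_isAcyclic_of_minimal {I : Ideal R} (hI : I ≠ ⊤) {C : AugFreeComplex R M a}
    {D : AugFreeComplex R M c} (hC : C.IsAcyclic) (hD : D.IsAcyclic)
    (hmin : ∀ i, range (C.d i) ≤ I • ⊤) (hCD : range C.aug ≤ range D.aug)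
    (hDC : range D.aug ≤ range C.aug) (i : ℕ) : a i ≤ c i := by
  obtain ⟨u, hu₀, hu⟩ := exists_chainMap hD hCD
  obtain ⟨v, hv₀, hv⟩ := exists_chainMap hC hDC
  refine le_of_fin_range_comp_sub_id_le hI (u i) (v i) <|
    range_le_smul_top_of_aug_comp_eq_zero hC hmin (fun i => v i ∘ₗ u i - LinearMap.id) ?_ ?_ i
  · rw [comp_sub, ← comp_assoc, hv₀, hu₀, comp_id, sub_self]
  · intro i
    rw [comp_sub, sub_comp, ← comp_assoc, hv, comp_assoc, hu, comp_assoc, comp_id, id_comp]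

end AugFreeComplex

theorem Finsupp.erase_le_iff_le_single_add {V : Type*} (j : V) {s m : V →₀ ℕ} (hs : s j ≤ 1) :
    s.erase j ≤ m ↔ s ≤ Finsupp.single j 1 + m := by
  simp only [Finsupp.le_def]
  refine forall_congr' fun v => ?_
  by_cases hv : v = j
  · subst hv
    simp only [Finsupp.erase_same, Finsupp.coe_add, Pi.add_apply, Finsupp.single_eq_same]
    omega
  · simp [Finsupp.erase_ne hv, Finsupp.single_eq_of_ne hv]

namespace MvPolynomial

variable {R V : Type*} [CommRing R]

theorem degreeOf_X_sub_one [Nontrivial R] (j : V) :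
    degreeOf j (X j - 1 : MvPolynomial V R) = 1 := by
  rw [sub_eq_add_neg, degreeOf_add_eq_of_degreeOf_lt] <;> simp [degreeOf_one]

theorem X_sub_one_ne_zero [Nontrivial R] (j : V) : (X j - 1 : MvPolynomial V R) ≠ 0 :=
  ne_zero_of_degreeOf_ne_zero (i := j) (by simp [degreeOf_X_sub_one])

variable [DecidableEq V]

noncomputable def dehomogenize (j : V) : MvPolynomial V R →+* MvPolynomial V R :=
  eval₂Hom C (Function.update X j 1)

variable (j : V)

@[simp]
theorem dehomogenize_C (a : R) : dehomogenize j (C a : MvPolynomial V R) = C a := by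
  simp [dehomogenize]

theorem dehomogenize_X (v : V) :
    dehomogenize j (X v : MvPolynomial V R) = Function.update X j 1 v := by
  simp [dehomogenize]

@[simp]
theorem dehomogenize_X_sub_one : dehomogenize j (X j - 1 : MvPolynomial V R) = 0 := by
  simp [dehomogenize_X]

theorem dehomogenize_comp_dehomogenize :
    (dehomogenize j).comp (dehomogenize j) = (dehomogenize j : MvPolynomial V R →+* _) := by
  refine ringHom_ext (by simp) fun v => ?_
  rcases eq_or_ne v j with rfl | hv
  · simp [dehomogenize_X]
  · simp [dehomogenize_X, hv]

theorem sub_dehomogenize_mem_span (p : MvPolynomial V R) :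
    p - dehomogenize j p ∈ Ideal.span {X j - 1} := by
  have : (Ideal.Quotient.mk (Ideal.span {X j - 1})).comp (dehomogenize j) =
      Ideal.Quotient.mk (Ideal.span {(X j - 1 : MvPolynomial V R)}) :=
    ringHom_ext (by simp) fun v => by
      by_cases hv : v = j
      · rw [hv, RingHom.comp_apply, dehomogenize_X, Function.update_self, Ideal.Quotient.eq]
        exact Ideal.mem_span_singleton'.mpr ⟨-1, by ring⟩
      · simp [dehomogenize_X, hv]
  rw [← Ideal.Quotient.eq, ← RingHom.comp_apply, this]

theorem degreeOf_dehomogenize (p : MvPolynomial V R) : degreeOf j (dehomogenize j p) = 0 := by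
  induction p using MvPolynomial.induction_on with
  | C a => simp [degreeOf_C]
  | add p q hp hq =>
    rw [map_add, ← Nat.le_zero]
    exact (degreeOf_add_le _ _ _).trans (by simp [hp, hq])
  | mul_X p v hp =>
    rw [map_mul, ← Nat.le_zero]
    refine (degreeOf_mul_le _ _ _).trans ?_
    rcases eq_or_ne v j with rfl | hv
    · simp [hp, dehomogenize_X, degreeOf_one]
    · simp [hp, dehomogenize_X, hv, degreeOf_X_of_ne hv.symm]

theorem dehomogenize_eq_self {p : MvPolynomial V R} (hp : degreeOf j p = 0) :
    dehomogenize j p = p :=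
  hom_congr_vars (f₂ := RingHom.id _) (by ext; simp) (fun v hv _ => by
    have hvj : v ≠ j := by rintro rfl; exact mem_vars_iff_degreeOf_ne_zero.mp hv hp
    simp [dehomogenize_X, hvj]) rfl

theorem dehomogenize_monomial (s : V →₀ ℕ) (a : R) :
    dehomogenize j (monomial s a) = monomial (s.erase j) a := by
  have hfree : degreeOf j (monomial (s.erase j) a) = 0 :=
    Nat.le_zero.mp <| degreeOf_le_iff.mpr fun m hm => by
      rw [Finset.mem_singleton.mp (support_monomial_subset hm), Finsupp.erase_same]
  conv_lhs => rw [← Finsupp.erase_add_single j s, ← mul_one a, ← monomial_mul,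
    ← X_pow_eq_monomial]
  simp [dehomogenize_X, dehomogenize_eq_self j hfree]

theorem exists_sub_dehomogenize_eq_mul [IsDomain R] (p : MvPolynomial V R) :
    ∃ q, p - dehomogenize j p = (X j - 1) * q ∧ degreeOf j q ≤ degreeOf j p - 1 := by
  obtain ⟨q, hq⟩ := Ideal.mem_span_singleton'.mp (sub_dehomogenize_mem_span j p)
  refine ⟨q, by rw [← hq, mul_comm], ?_⟩
  rcases eq_or_ne q 0 with rfl | hq0
  · simp
  have h : degreeOf j (p - dehomogenize j p) ≤ degreeOf j p :=
    (degreeOf_sub_le j p _).trans (by simp [degreeOf_dehomogenize])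
  rw [← hq, degreeOf_mul_eq hq0 (X_sub_one_ne_zero j), degreeOf_X_sub_one] at h
  omega

theorem mem_of_X_sub_one_mul_mem {A : Set (V →₀ ℕ)} {f : MvPolynomial V R}
    (h : (X j - 1) * f ∈ Ideal.span ((fun s => monomial s (1 : R)) '' A)) :
    f ∈ Ideal.span ((fun s => monomial s (1 : R)) '' A) := by
  classical
  rw [mem_ideal_span_monomial_image] at h ⊢
  by_contra! hf
  obtain ⟨m₀, hm₀, hm₀A⟩ := hf
  -- a monomial of `f` outside the ideal, of least `X j`-degree, survives in `(X j - 1) * f`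
  obtain ⟨m, hm, hmin⟩ := (f.support.filter fun m => ∀ s ∈ A, ¬ s ≤ m).exists_min_image
    (· j) ⟨m₀, Finset.mem_filter.mpr ⟨hm₀, hm₀A⟩⟩
  rw [Finset.mem_filter] at hm
  have hcoeff : coeff m ((X j - 1) * f) = -coeff m f := by
    rw [sub_mul, one_mul, coeff_sub, coeff_X_mul']
    split_ifs with hj
    · suffices coeff (m - Finsupp.single j 1) f = 0 by rw [this, zero_sub]
      by_contra hne
      have := hmin _ (Finset.mem_filter.mpr ⟨mem_support_iff.mpr hne,
        fun s hs hle => hm.2 s hs (hle.trans tsub_le_self)⟩)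
      simp only [Finsupp.coe_tsub, Pi.sub_apply, Finsupp.single_eq_same] at this
      have := Finsupp.mem_support_iff.mp hj
      omega
    · rw [zero_sub]
  obtain ⟨s, hs, hsm⟩ := h m (mem_support_iff.mpr (by
    rw [hcoeff, neg_ne_zero]; exact mem_support_iff.mp hm.1))
  exact hm.2 s hs hsm

theorem colon_span_X_eq_map_dehomogenize {A : Set (V →₀ ℕ)} (hA : ∀ s ∈ A, s j ≤ 1) :
    Submodule.colon (Ideal.span ((fun s => monomial s (1 : R)) '' A))
        ((Ideal.span {X j} : Ideal (MvPolynomial V R)) : Set (MvPolynomial V R)) =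
      (Ideal.span ((fun s => monomial s (1 : R)) '' A)).map (dehomogenize j) := by
  rw [Ideal.map_span, Set.image_image]
  simp_rw [dehomogenize_monomial]
  rw [← Set.image_image (fun s => monomial s (1 : R)) (Finsupp.erase j)]
  ext f
  rw [Ideal.mem_colon_span_singleton, mul_comm, mem_ideal_span_monomial_image,
    mem_ideal_span_monomial_image, support_X_mul]
  simp only [Finset.mem_map, addLeftEmbedding_apply, Set.exists_mem_image, forall_exists_index,
    and_imp, forall_apply_eq_imp_iff₂]
  exact forall₂_congr fun m _ => exists_congr fun s => and_congr_right fun hs =>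
    (Finsupp.erase_le_iff_le_single_add j (hA s hs)).symm

end MvPolynomial

namespace LinearMap

open MvPolynomial

theorem mem_ker_of_smul_mem_ker {R P Q : Type*} [CommRing R] [IsDomain R] [AddCommGroup P]
    [Module R P] [AddCommGroup Q] [Module R Q] [Module.IsTorsionFree R Q] (f : P →ₗ[R] Q)
    {t : R} (ht : t ≠ 0) {u : P} (h : t • u ∈ ker f) : u ∈ ker f := by
  rw [mem_ker, map_smul] at h
  exact (smul_eq_zero_iff_right ht).mp h

theorem mem_range_mapCoeffs_iff {R R' α : Type*} [CommRing R] [CommRing R'] [Fintype α]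
    [DecidableEq α] (φ : R →+* R') {J : Ideal R} {f : (α → R) →ₗ[R] (Unit → R)}
    (hf : ∀ y, y ∈ range f ↔ y () ∈ J) {y : Unit → R'} :
    y ∈ range (f.mapCoeffs φ) ↔ y () ∈ J.map φ := by
  constructor
  · rintro ⟨x, rfl⟩
    rw [mapCoeffs, Matrix.toLin'_apply, Matrix.mulVec, dotProduct]
    refine sum_mem fun c _ => Ideal.mul_mem_right _ _ (Ideal.mem_map_of_mem φ ?_)
    rw [toMatrix'_apply]
    exact (hf _).mp ⟨_, rfl⟩
  · intro hy
    let diag : R' →ₗ[R'] (Unit → R') := LinearMap.pi fun _ => LinearMap.id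
    have : J.map φ ≤ (range (f.mapCoeffs φ)).comap diag := Ideal.map_le_iff_le_comap.mpr
      fun p hp => by
        obtain ⟨x, hx⟩ := (hf fun _ => p).mpr hp
        exact ⟨φ ∘ x, by rw [mapCoeffs_apply_comp, hx]; rfl⟩
    exact this hy

variable {R V : Type*} [CommRing R] [DecidableEq V] {α β γ : Type*} [Fintype α] [DecidableEq α]
  [Fintype γ] [DecidableEq γ] (j : V)

theorem dehomogenize_comp_mapCoeffs_dehomogenize
    (f : (α → MvPolynomial V R) →ₗ[MvPolynomial V R] (β → MvPolynomial V R))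
    (v : α → MvPolynomial V R) :
    dehomogenize j ∘ f.mapCoeffs (dehomogenize j) v = dehomogenize j ∘ f v := by
  rw [← mapCoeffs_apply_comp _ (f.mapCoeffs _), mapCoeffs_mapCoeffs,
    dehomogenize_comp_dehomogenize, mapCoeffs_apply_comp]

variable {f : (α → MvPolynomial V R) →ₗ[MvPolynomial V R] (β → MvPolynomial V R)}
  {g : (γ → MvPolynomial V R) →ₗ[MvPolynomial V R] (α → MvPolynomial V R)}

theorem dehomogenize_comp_mem_range_mapCoeffs (hfg : ker f = range g)
    (hf : ∀ u, (X j - 1 : MvPolynomial V R) • u ∈ range f → u ∈ range f)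
    {v : α → MvPolynomial V R} (hv : f.mapCoeffs (dehomogenize j) v = 0) :
    dehomogenize j ∘ v ∈ range (g.mapCoeffs (dehomogenize j)) := by
  -- `f` and its dehomogenization agree modulo `X j - 1`, so `f v ∈ (X j - 1) • range f`
  have hσ (r : β) : dehomogenize j (f v r) = 0 := by
    simpa [hv, eq_comm] using congr_fun (dehomogenize_comp_mapCoeffs_dehomogenize j f v) r
  choose u hu using fun r => Ideal.mem_span_singleton.mp <| by
    simpa [hσ r] using sub_dehomogenize_mem_span j (f v r)
  obtain ⟨w, hw⟩ := hf u ⟨v, funext fun r => hu r⟩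
  obtain ⟨w', hw'⟩ : v - (X j - 1 : MvPolynomial V R) • w ∈ range g := by
    rw [← hfg, mem_ker, map_sub, map_smul, hw]
    exact sub_eq_zero.mpr (funext hu)
  refine ⟨dehomogenize j ∘ w', ?_⟩
  rw [mapCoeffs_apply_comp, hw']
  funext r
  simp [dehomogenize_X_sub_one]

theorem ker_mapCoeffs_dehomogenize [IsDomain R] (hfg : ker f = range g)
    (hf : ∀ u, (X j - 1 : MvPolynomial V R) • u ∈ range f → u ∈ range f) :
    ker (f.mapCoeffs (dehomogenize j)) = range (g.mapCoeffs (dehomogenize j)) := by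
  have hcomp : range (g.mapCoeffs (dehomogenize j)) ≤ ker (f.mapCoeffs (dehomogenize j)) := by
    rw [range_le_ker_iff, ← mapCoeffs_comp, range_le_ker_iff.mp hfg.ge, mapCoeffs_zero]
  refine le_antisymm ?_ hcomp
  suffices ∀ n (v : α → MvPolynomial V R), (∀ r, degreeOf j (v r) ≤ n) →
      f.mapCoeffs (dehomogenize j) v = 0 → v ∈ range (g.mapCoeffs (dehomogenize j)) from
    fun v hv => this _ v (fun r => Finset.le_sup (f := fun r => degreeOf j (v r))
      (Finset.mem_univ r)) hv
  intro n
  induction n with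
  | zero =>
    intro v hdeg hv
    have hfree (r : α) : dehomogenize j (v r) = v r :=
      dehomogenize_eq_self j (by have := hdeg r; omega)
    have : dehomogenize j ∘ v = v := funext hfree
    rw [← this]
    exact dehomogenize_comp_mem_range_mapCoeffs j hfg hf hv
  | succ n ih =>
    intro v hdeg hv
    choose w hw hwdeg using fun r => exists_sub_dehomogenize_eq_mul j (v r)
    have hσv := dehomogenize_comp_mem_range_mapCoeffs j hfg hf hv
    have hv_eq : v = dehomogenize j ∘ v + (X j - 1 : MvPolynomial V R) • w :=
      funext fun r => by
        rw [Pi.add_apply, Function.comp_apply, Pi.smul_apply, smul_eq_mul, ← hw r,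
          add_sub_cancel]
    have hw_ker : w ∈ ker (f.mapCoeffs (dehomogenize j)) := by
      refine mem_ker_of_smul_mem_ker _ (X_sub_one_ne_zero j) ?_
      rw [mem_ker, eq_sub_of_add_eq' hv_eq.symm, map_sub, hv, hcomp hσv, sub_zero]
    rw [hv_eq]
    exact add_mem hσv (Submodule.smul_mem _ _
      (ih w (fun r => (hwdeg r).trans (by have := hdeg r; omega)) hw_ker))

end LinearMap

namespace AugFreeComplex

open LinearMap MvPolynomial

variable {R V : Type*} [CommRing R] [DecidableEq V] {β : Type*} {b : ℕ → ℕ}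

noncomputable def dehomogenize (C : AugFreeComplex (MvPolynomial V R) (β → MvPolynomial V R) b)
    (j : V) : AugFreeComplex (MvPolynomial V R) (β → MvPolynomial V R) b where
  d i := (C.d i).mapCoeffs (MvPolynomial.dehomogenize j)
  aug := C.aug.mapCoeffs (MvPolynomial.dehomogenize j)
  aug_comp_d := by rw [← mapCoeffs_comp, C.aug_comp_d, mapCoeffs_zero]
  d_comp_d i := by rw [← mapCoeffs_comp, C.d_comp_d, mapCoeffs_zero]

theorem IsAcyclic.dehomogenize [IsDomain R]
    {C : AugFreeComplex (MvPolynomial V R) (β → MvPolynomial V R) b} (hC : C.IsAcyclic) (j : V)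
    (haug : ∀ u, (X j - 1 : MvPolynomial V R) • u ∈ range C.aug → u ∈ range C.aug) :
    (C.dehomogenize j).IsAcyclic := by
  refine ⟨ker_mapCoeffs_dehomogenize j hC.1 haug, fun i =>
    ker_mapCoeffs_dehomogenize j (hC.2 i) fun u hu => ?_⟩
  cases i with
  | zero => rw [← hC.1] at hu ⊢; exact mem_ker_of_smul_mem_ker _ (X_sub_one_ne_zero j) hu
  | succ i => rw [← hC.2 i] at hu ⊢; exact mem_ker_of_smul_mem_ker _ (X_sub_one_ne_zero j) hu

end AugFreeComplex

namespace MinFreeRes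

open LinearMap

variable {S : Type*} [CommRing S] {mx J : Ideal S} {b : ℕ → ℕ} (F : MinFreeRes S mx J b)

/-- The resolution `⋯ → F₀ → S` of `S ⧸ J`, with `Unit → S` standing for `S`. -/
def toAugFreeComplex : AugFreeComplex S (Unit → S) b where
  d := F.d
  aug := LinearMap.pi fun _ => J.subtype ∘ₗ F.aug
  aug_comp_d := LinearMap.ext fun x => funext fun _ => by
    have : F.d 0 x ∈ ker F.aug := F.exact_aug ▸ ⟨x, rfl⟩
    simp_all
  d_comp_d i := range_le_ker_iff.mp (F.exact i).ge

theorem mem_range_toAugFreeComplex_aug {y : Unit → S} :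
    y ∈ range F.toAugFreeComplex.aug ↔ y () ∈ J := by
  refine ⟨fun ⟨x, hx⟩ => hx ▸ (F.aug x).2, fun hy => ?_⟩
  obtain ⟨x, hx⟩ := F.aug_surj ⟨_, hy⟩
  exact ⟨x, funext fun _ => congrArg Subtype.val hx⟩

theorem isAcyclic_toAugFreeComplex : F.toAugFreeComplex.IsAcyclic := by
  refine ⟨?_, F.exact⟩
  show _ = range (F.d 0)
  rw [← F.exact_aug]
  ext x
  simp [toAugFreeComplex, funext_iff]

end MinFreeRes

theorem maxIdeal_ne_top (K V : Type*) [Field K] : maxIdeal K V ≠ ⊤ := by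
  have : maxIdeal K V ≤ RingHom.ker (MvPolynomial.constantCoeff) :=
    Ideal.span_le.mpr (by rintro _ ⟨v, rfl⟩; simp)
  exact fun h => by simpa using this (h ▸ Submodule.mem_top : (1 : MvPolynomial V K) ∈ _)

/-- for a squarefree monomial ideal `I` and a variable `x = X j`,
`β_i(I) ≥ β_i(I : x)` for all `i`. -/
theorem stmt8 (K : Type*) [Field K] {N : ℕ} (I : Ideal (MvPolynomial (Fin N) K))
    (hsf : IsSqfreeMonomialIdeal I) (j : Fin N) (b b' : ℕ → ℕ)
    (F : MinFreeRes (MvPolynomial (Fin N) K) (maxIdeal K (Fin N)) I b)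
    (F' : MinFreeRes (MvPolynomial (Fin N) K) (maxIdeal K (Fin N))
      (Submodule.colon I ((Ideal.span {X j} : Ideal (MvPolynomial (Fin N) K)) : Set (MvPolynomial (Fin N) K))) b')
    (i : ℕ) : b' i ≤ b i := by
  obtain ⟨A, hA, rfl⟩ := hsf
  have hG : (F.toAugFreeComplex.dehomogenize j).IsAcyclic :=
    F.isAcyclic_toAugFreeComplex.dehomogenize j fun u hu => by
      rw [F.mem_range_toAugFreeComplex_aug] at hu ⊢
      exact mem_of_X_sub_one_mul_mem j hu
  have hrange (y) : y ∈ LinearMap.range (F.toAugFreeComplex.dehomogenize j).aug ↔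
      y ∈ LinearMap.range F'.toAugFreeComplex.aug := by
    rw [F'.mem_range_toAugFreeComplex_aug, colon_span_X_eq_map_dehomogenize j fun s hs => hA s hs j]
    exact LinearMap.mem_range_mapCoeffs_iff _ fun y => F.mem_range_toAugFreeComplex_aug
  exact AugFreeComplex.le_of_isAcyclic_of_minimal (maxIdeal_ne_top K (Fin N))
    F'.isAcyclic_toAugFreeComplex hG F'.minimal (fun y => (hrange y).mpr) (fun y => (hrange y).mp) i
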